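/- Let f : \mathbb{R}_{\ge 0} \to \mathbb{R} be defined by f(t) = A + \sum_{i=1}^{m} \lceil t/T_i \rceil * C_i with A > 0, C_i \ge 0, T_i > 0. Then f is monotone nondecreasing, and if there exists t* > 0 with f(t*) \le t*, then the set {t > 0 : f(t) \le t} has a minimum element R, and f(R) = R or R is where f(t) first dips to \le t; moreover f(t) > t for all 0 < t < R. -/

import Mathlib

/-!
The demand `A + ∑ ⌈t / Tᵢ⌉ Cᵢ` is monotone and at least `A > 0` on `t > 0`, so the crossing set
`{t > 0 | f t ≤ t}` is bounded below by `A`. Its infimum `R` is positive, and monotonicity gives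
`f R ≤ f t ≤ t` for every crossing point `t`, hence `f R ≤ R`: the infimum is itself a crossing point.
-/

theorem Monotone.map_csInf_le_csInf {α : Type*} [ConditionallyCompleteLattice α] {f : α → α}
    (hf : Monotone f) {s : Set α} (hne : s.Nonempty) (hbdd : BddBelow s)
    (hs : ∀ t ∈ s, f t ≤ t) : f (sInf s) ≤ sInf s :=
  le_csInf hne fun t ht => (hf (csInf_le hbdd ht)).trans (hs t ht)

theorem isLeast_csInf_pos_crossing {f : ℝ → ℝ} (hf : Monotone f) {a : ℝ} (ha : 0 < a)
    (hfa : ∀ t, 0 < t → a ≤ f t) (hex : ∃ t, 0 < t ∧ f t ≤ t) :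
    IsLeast {t | 0 < t ∧ f t ≤ t} (sInf {t | 0 < t ∧ f t ≤ t}) := by
  set s := {t | 0 < t ∧ f t ≤ t}
  have ha_le : ∀ t ∈ s, a ≤ t := fun t ⟨ht, hft⟩ => (hfa t ht).trans hft
  have hbdd : BddBelow s := ⟨a, ha_le⟩
  have hpos : 0 < sInf s := ha.trans_le (le_csInf hex ha_le)
  exact ⟨⟨hpos, hf.map_csInf_le_csInf hex hbdd fun t ht => ht.2⟩, fun t ht => csInf_le hbdd ht⟩

noncomputable def timeDemand {ι : Type*} [Fintype ι] (A : ℝ) (T C : ι → ℝ) (t : ℝ) : ℝ :=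
  A + ∑ i, (⌈t / T i⌉ : ℝ) * C i

section timeDemand

variable {ι : Type*} [Fintype ι] {T C : ι → ℝ}

theorem timeDemand_monotone (A : ℝ) (hT : ∀ i, 0 < T i) (hC : ∀ i, 0 ≤ C i) :
    Monotone (timeDemand A T C) := fun s t hst => by
  unfold timeDemand
  gcongr with i
  exacts [hC i, (hT i).le]

theorem le_timeDemand (A : ℝ) (hT : ∀ i, 0 < T i) (hC : ∀ i, 0 ≤ C i) {t : ℝ} (ht : 0 ≤ t) :
    A ≤ timeDemand A T C t := by
  unfold timeDemand
  refine le_add_of_nonneg_right (Finset.sum_nonneg fun i _ => mul_nonneg ?_ (hC i))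
  exact_mod_cast Int.ceil_nonneg (div_nonneg ht (hT i).le)

end timeDemand

theorem stmt8 (m : ℕ) (A : ℝ) (hA : 0 < A)
    (T Ci : Fin m → ℝ) (hT : ∀ i, 0 < T i) (hCi : ∀ i, 0 ≤ Ci i)
    (f : ℝ → ℝ) (hf : ∀ t, f t = A + ∑ i, (⌈t / T i⌉ : ℝ) * Ci i) :
    (∀ s t : ℝ, 0 ≤ s → s ≤ t → f s ≤ f t) ∧
    ((∃ t : ℝ, 0 < t ∧ f t ≤ t) →
      ∃ R : ℝ, IsLeast {t : ℝ | 0 < t ∧ f t ≤ t} R ∧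
        ∀ t : ℝ, 0 < t → t < R → f t > t) := by
  obtain rfl : f = timeDemand A T Ci := funext hf
  have hmono := timeDemand_monotone A hT hCi
  refine ⟨fun s t _ hst => hmono hst, fun hex => ?_⟩
  have hleast := isLeast_csInf_pos_crossing hmono hA
    (fun t ht => le_timeDemand A hT hCi ht.le) hex
  refine ⟨_, hleast, fun t ht htR => ?_⟩
  by_contra hle
  exact htR.not_ge (hleast.2 ⟨ht, not_lt.mp hle⟩)
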